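/- Let F be a p-adic field with ring of integers R, uniformizer ϖ, and unramified quadratic extension F_A = F(√A) with A ∈ R^× a non-square unit. Let γ ∈ F_A^× ∖ F^× and set δ = φ^A(γ) ∈ GL(2, F) and δ^ϖ = diag(1,ϖ)^{-1} δ diag(1,ϖ). Then δ and δ^ϖ are conjugate in GL(2, F̄) (indeed by diag(1,ϖ)), but there is no g ∈ GL(2,F) with det g ∈ N_{F_A/F}(F_A^×) satisfying g^{-1} δ g = δ^ϖ. -/
import Mathlib


open Matrix

/-- Let `F_A = F(√A)` be the unramified quadratic extension of a p-adic field `F`,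
`ϖ` a uniformizer (so `ϖ` is not a norm from `F_A`, i.e. not of the form `x² - Ay²`),
and `γ = a + b√A ∈ F_A^× \ F^×` (so `b ≠ 0`, `a² - Ab² ≠ 0`).  Then
`δ = φ^A(γ)` and `δ^ϖ = diag(1,ϖ)⁻¹ δ diag(1,ϖ)` are conjugate by `diag(1,ϖ)`
(the displayed matrix identity), but no `g ∈ GL(2,F)` with `det g ∈ N_{F_A/F}(F_A^×)`
conjugates `δ` to `δ^ϖ`. -/
theorem stably_conjugate_not_conjugate
    (F : Type*) [Field F]
    (A : F) (hA : ∀ z : F, z ^ 2 ≠ A)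
    (ϖ : F) (hϖ0 : ϖ ≠ 0)
    (hϖ : ¬ ∃ x y : F, ϖ = x ^ 2 - A * y ^ 2)
    (a b : F) (hb : b ≠ 0) (hreg : a ^ 2 - A * b ^ 2 ≠ 0) :
    ((!![1, 0; 0, ϖ⁻¹] : Matrix (Fin 2) (Fin 2) F) * !![a, b * A; b, a] * !![1, 0; 0, ϖ]
        = !![a, b * A * ϖ; ϖ⁻¹ * b, a]) ∧
    ¬ ∃ g : (Matrix (Fin 2) (Fin 2) F)ˣ,
        (∃ x y : F, ((g : Matrix (Fin 2) (Fin 2) F)).det = x ^ 2 - A * y ^ 2) ∧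
        ((g⁻¹ : (Matrix (Fin 2) (Fin 2) F)ˣ) : Matrix (Fin 2) (Fin 2) F) *
            !![a, b * A; b, a] * (g : Matrix (Fin 2) (Fin 2) F)
          = !![a, b * A * ϖ; ϖ⁻¹ * b, a] := by
  have hA0 : A ≠ 0 := fun h => hA 0 (by simp [h])
  constructor
  · ext i j
    fin_cases i <;> fin_cases j <;>
      simp [Matrix.mul_apply, Fin.sum_univ_two] <;> field_simp <;> ring
  · rintro ⟨g, ⟨u, v, hdet⟩, hconj⟩
    -- turn conjugation into commutation-style equation δ g = g δϖ
    have h2 : !![a, b * A; b, a] * (g : Matrix (Fin 2) (Fin 2) F)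
        = (g : Matrix (Fin 2) (Fin 2) F) * !![a, b * A * ϖ; ϖ⁻¹ * b, a] := by
      have hgg : (g : Matrix (Fin 2) (Fin 2) F) * ((g⁻¹ : (Matrix (Fin 2) (Fin 2) F)ˣ) : Matrix (Fin 2) (Fin 2) F) = 1 := Units.mul_inv g
      rw [← hconj, ← Matrix.mul_assoc, ← Matrix.mul_assoc, hgg, Matrix.one_mul]
    set p := (g : Matrix (Fin 2) (Fin 2) F) 0 0 with hp
    set q := (g : Matrix (Fin 2) (Fin 2) F) 0 1 with hq
    set r := (g : Matrix (Fin 2) (Fin 2) F) 1 0 with hr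
    set s := (g : Matrix (Fin 2) (Fin 2) F) 1 1 with hs
    have e00 := congrFun (congrFun h2 0) 0
    have e01 := congrFun (congrFun h2 0) 1
    simp [Matrix.mul_apply, Fin.sum_univ_two, ← hp, ← hq, ← hr, ← hs] at e00 e01
    -- e00 : a * p + b * A * r = p * a + q * (ϖ⁻¹ * b)
    -- e01 : a * q + b * A * s = p * (b * A * ϖ) + q * a
    have hqr : q = A * ϖ * r := by
      field_simp at e00
      have : b * (A * ϖ * r) = b * q := by linear_combination e00
      exact (mul_left_cancel₀ hb this).symm
    have hsp : s = ϖ * p := by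
      have : b * A * s = b * A * (ϖ * p) := by linear_combination e01
      exact mul_left_cancel₀ (mul_ne_zero hb hA0) this
    have hdet2 : ((g : Matrix (Fin 2) (Fin 2) F)).det = ϖ * (p ^ 2 - A * r ^ 2) := by
      rw [Matrix.det_fin_two, ← hp, ← hq, ← hr, ← hs, hqr, hsp]; ring
    have hdne : ((g : Matrix (Fin 2) (Fin 2) F)).det ≠ 0 := by
      have : IsUnit ((g : Matrix (Fin 2) (Fin 2) F)).det :=
        (Matrix.isUnit_iff_isUnit_det _).mp g.isUnit
      exact this.ne_zero
    have hD : p ^ 2 - A * r ^ 2 ≠ 0 := by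
      intro h; apply hdne; rw [hdet2, h, mul_zero]
    have key : ϖ * (p ^ 2 - A * r ^ 2) = u ^ 2 - A * v ^ 2 := by
      rw [← hdet2, hdet]
    apply hϖ
    refine ⟨(u * p - A * v * r) / (p ^ 2 - A * r ^ 2),
      (v * p - u * r) / (p ^ 2 - A * r ^ 2), ?_⟩
    field_simp
    linear_combination (p ^ 2 - A * r ^ 2) * key
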